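/- arXiv:1405.5682 — 2 statements merged into one kernel-verified Lean document; each statement's English description precedes it below -/
import Mathlib

section
/- Let 0 ⊊ L_1 ⊊ L_2 ⊊ ⋯ ⊊ L_k ⊊ ℝ^n be a flag of linear subspaces with dim L_i = d_i. For a d-dimensional subspace L ⊆ ℝ^n and a subset J ⊆ {1, …, n} with |J| = d, say J ∈ supp(L) if the orthogonal projection of ℝ^n onto span(e_j : j ∈ J) restricts to a linear isomorphism from L onto span(e_j : j ∈ J) (equivalently, the J-th Plücker coordinate of L is nonzero). Then there exist subsets J_1 ⊆ J_2 ⊆ ⋯ ⊆ J_k of {1, …, n} with |J_i| = d_i and J_i ∈ supp(L_i) for every i. -/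
noncomputable section

/-- The coordinate projection of `ℝ^n` onto `span(e_j : j ∈ J)`. -/
def projJ {n : ℕ} (J : Finset (Fin n)) : (Fin n → ℝ) →ₗ[ℝ] (Fin n → ℝ) :=
  (Matrix.diagonal fun j => if j ∈ J then (1 : ℝ) else 0).mulVecLin

/-- The coordinate subspace `span(e_j : j ∈ J)` of `ℝ^n`. -/
def coordSpan {n : ℕ} (J : Finset (Fin n)) : Submodule ℝ (Fin n → ℝ) :=
  Submodule.span ℝ {x | ∃ j ∈ J, x = Pi.single j (1 : ℝ)}

/-- `J ∈ supp(L)`: the orthogonal projection onto `span(e_j : j ∈ J)` restricts to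
a linear isomorphism from `L` onto `span(e_j : j ∈ J)` (equivalently, the `J`-th
Plücker coordinate of `L` is nonzero). -/
def memSupp {n : ℕ} (J : Finset (Fin n)) (L : Submodule ℝ (Fin n → ℝ)) : Prop :=
  Submodule.map (projJ J) L = coordSpan J ∧ ∀ x ∈ L, projJ J x = 0 → x = 0

namespace FlagAux

variable {n : ℕ}

def coordSub (C : Finset (Fin n)) : Submodule ℝ (Fin n → ℝ) where
  carrier := {x | ∀ i ∉ C, x i = 0}
  add_mem' := by intro a b ha hb i hi; simp [ha i hi, hb i hi]
  zero_mem' := by intro i hi; rfl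
  smul_mem' := by intro c x hx i hi; simp [hx i hi]

lemma mem_coordSub {C : Finset (Fin n)} {x : Fin n → ℝ} :
    x ∈ coordSub C ↔ ∀ i ∉ C, x i = 0 := Iff.rfl

lemma coordSub_mono {C C' : Finset (Fin n)} (h : C ⊆ C') : coordSub C ≤ coordSub C' :=
  fun x hx i hi => hx i fun hc => hi (h hc)

lemma single_mem_coordSub {C : Finset (Fin n)} {j : Fin n} (hj : j ∈ C) :
    Pi.single j (1 : ℝ) ∈ coordSub C := by
  intro i hi
  exact Pi.single_eq_of_ne (by rintro rfl; exact hi hj) 1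

lemma coordSpan_eq (J : Finset (Fin n)) : coordSpan J = coordSub J := by
  apply le_antisymm
  · rw [coordSpan, Submodule.span_le]
    rintro x ⟨j, hj, rfl⟩
    exact single_mem_coordSub hj
  · intro x hx
    have hxsum : x = ∑ j ∈ J, x j • (Pi.single j 1 : Fin n → ℝ) := by
      funext i
      rw [Finset.sum_apply]
      simp only [Pi.smul_apply, Pi.single_apply, smul_eq_mul, mul_ite, mul_one, mul_zero]
      rw [Finset.sum_ite_eq J i x]
      by_cases hi : i ∈ J
      · simp [hi]
      · simp [hi, hx i hi]
    rw [hxsum]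
    exact Submodule.sum_mem _ fun j hj =>
      Submodule.smul_mem _ _ (Submodule.subset_span ⟨j, hj, rfl⟩)

lemma singles_li : LinearIndependent ℝ (fun j : Fin n => (Pi.single j 1 : Fin n → ℝ)) := by
  have h := (Pi.basisFun ℝ (Fin n)).linearIndependent
  have he : ⇑(Pi.basisFun ℝ (Fin n)) = fun j : Fin n => (Pi.single j 1 : Fin n → ℝ) :=
    funext fun j => Pi.basisFun_apply ℝ (Fin n) j
  rwa [he] at h

lemma finrank_coordSub (C : Finset (Fin n)) :
    Module.finrank ℝ (coordSub C) = C.card := by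
  rw [← coordSpan_eq]
  have hset : {x : Fin n → ℝ | ∃ j ∈ C, x = Pi.single j (1 : ℝ)}
      = Set.range (fun j : (C : Set (Fin n)) => (Pi.single (j : Fin n) 1 : Fin n → ℝ)) := by
    ext x
    constructor
    · rintro ⟨j, hj, rfl⟩; exact ⟨⟨j, hj⟩, rfl⟩
    · rintro ⟨⟨j, hj⟩, rfl⟩
      exact ⟨j, hj, rfl⟩
  have hli : LinearIndependent ℝ
      (fun j : (C : Set (Fin n)) => (Pi.single (j : Fin n) 1 : Fin n → ℝ)) := by
    exact singles_li.comp Subtype.val Subtype.val_injective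
  rw [coordSpan, hset, finrank_span_eq_card hli]
  simp

lemma projJ_apply (J : Finset (Fin n)) (x : Fin n → ℝ) (i : Fin n) :
    projJ J x i = if i ∈ J then x i else 0 := by
  simp [projJ, Matrix.mulVecLin_apply, Matrix.mulVec_diagonal, ite_mul]

lemma projJ_eq_zero_iff {J : Finset (Fin n)} {x : Fin n → ℝ} :
    projJ J x = 0 ↔ x ∈ coordSub Jᶜ := by
  constructor
  · intro h i hi
    have := congrFun h i
    rw [Finset.mem_compl, not_not] at hi
    simpa [projJ_apply, hi] using this
  · intro h
    funext i
    by_cases hi : i ∈ J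
    · simpa [projJ_apply, hi] using h i (by simpa [Finset.mem_compl] using hi)
    · simp [projJ_apply, hi]

lemma memSupp_of (J : Finset (Fin n)) (L : Submodule ℝ (Fin n → ℝ))
    (hcard : J.card = Module.finrank ℝ L) (hdisj : L ⊓ coordSub Jᶜ = ⊥) :
    memSupp J L := by
  have hker : ∀ x ∈ L, projJ J x = 0 → x = 0 := by
    intro x hx h0
    have : x ∈ L ⊓ coordSub Jᶜ := ⟨hx, projJ_eq_zero_iff.mp h0⟩
    simpa [hdisj] using this
  refine ⟨?_, hker⟩
  have hle : Submodule.map (projJ J) L ≤ coordSpan J := by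
    rw [coordSpan_eq]
    rintro _ ⟨x, _, rfl⟩ i hi
    rw [projJ_apply, if_neg hi]
  apply Submodule.eq_of_le_of_finrank_eq hle
  have hf : Module.finrank ℝ (Submodule.map (projJ J) L) = Module.finrank ℝ L := by
    set f := (projJ J).comp L.subtype with hf_def
    have hrange : LinearMap.range f = Submodule.map (projJ J) L := by
      rw [hf_def, LinearMap.range_comp, Submodule.range_subtype]
    have hkerf : LinearMap.ker f = ⊥ := by
      rw [LinearMap.ker_eq_bot']
      intro m hm
      have : (m : Fin n → ℝ) = 0 := hker m m.2 hm
      exact Subtype.ext this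
    have := LinearMap.finrank_range_add_finrank_ker f
    rw [hrange, hkerf] at this
    simpa using this
  rw [hf, coordSpan_eq, finrank_coordSub, ← hcard]

lemma exists_coord_compl : ∀ (r : ℕ) (C : Finset (Fin n)) (M : Submodule ℝ (Fin n → ℝ)),
    Module.finrank ℝ M = r → M ≤ coordSub C →
    ∃ C' : Finset (Fin n), C' ⊆ C ∧ M ⊓ coordSub C' = ⊥ ∧ M ⊔ coordSub C' = coordSub C := by
  intro r
  induction r using Nat.strong_induction_on with
  | _ r ih =>
    intro C M hr hMC
    rcases eq_or_ne M ⊥ with rfl | hM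
    · exact ⟨C, subset_rfl, by simp, by simp⟩
    · obtain ⟨m, hmM, hm0⟩ := Submodule.exists_mem_ne_zero_of_ne_bot hM
      obtain ⟨j, hj⟩ := Function.ne_iff.mp hm0
      have hj' : m j ≠ 0 := by simpa using hj
      have hjC : j ∈ C := by by_contra h; exact hj' (hMC hmM j h)
      set M' := M ⊓ coordSub (C.erase j) with hM'def
      have hmnot : m ∉ M' := by
        intro hmem
        exact hj' (hmem.2 j (fun h => (Finset.notMem_erase j C) h))
      have hM'lt : M' < M := lt_of_le_of_ne inf_le_left (fun h => hmnot (h ▸ hmM))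
      have hlt : Module.finrank ℝ M' < r :=
        hr ▸ Submodule.finrank_lt_finrank_of_lt hM'lt
      obtain ⟨C', hC'sub, hinf, hsup⟩ :=
        ih _ hlt (C.erase j) M' rfl inf_le_right
      refine ⟨C', hC'sub.trans (Finset.erase_subset j C), ?_, ?_⟩
      · rw [eq_bot_iff]
        intro x ⟨hxM, hxC'⟩
        have hx' : x ∈ M' := ⟨hxM, coordSub_mono hC'sub hxC'⟩
        have : x ∈ M' ⊓ coordSub C' := ⟨hx', hxC'⟩
        simpa [hinf] using this
      · apply le_antisymm
        · exact sup_le hMC ((coordSub_mono hC'sub).trans (coordSub_mono (Finset.erase_subset j C)))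
        · intro x hx
          have hy : x - (x j / m j) • m ∈ coordSub (C.erase j) := by
            intro i hi
            by_cases hij : i = j
            · rw [Pi.sub_apply, Pi.smul_apply, smul_eq_mul, hij, div_mul_cancel₀ _ hj', sub_self]
            · have hiC : i ∉ C := fun h => hi (Finset.mem_erase.mpr ⟨hij, h⟩)
              simp [hx i hiC, hMC hmM i hiC]
          have hy' : x - (x j / m j) • m ∈ M ⊔ coordSub C' := by
            have h1 : x - (x j / m j) • m ∈ M' ⊔ coordSub C' := hsup.symm ▸ hy
            exact (sup_le_sup_right (inf_le_left : M' ≤ M) _) h1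
          have hm' : (x j / m j) • m ∈ M ⊔ coordSub C' :=
            Submodule.mem_sup_left (Submodule.smul_mem _ _ hmM)
          have := Submodule.add_mem _ hy' hm'
          simpa using this

lemma finrank_ambient_eq : Module.finrank ℝ (Fin n → ℝ) = n := by
  simp [Module.finrank_fin_fun]

lemma step {L L' : Submodule ℝ (Fin n → ℝ)} (hLL' : L ≤ L') (J : Finset (Fin n))
    (hcard : J.card = Module.finrank ℝ L) (hdisj : L ⊓ coordSub Jᶜ = ⊥) :
    ∃ J' : Finset (Fin n), J ⊆ J' ∧ J'.card = Module.finrank ℝ L' ∧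
      L' ⊓ coordSub J'ᶜ = ⊥ := by
  set C := Jᶜ with hC
  -- L ⊔ coordSub C = ⊤
  have hcardC : C.card = n - J.card := by
    rw [hC, Finset.card_compl, Fintype.card_fin]
  have hcardJC : J.card + C.card = n := by
    rw [hC]
    have := Finset.card_add_card_compl J
    rwa [Fintype.card_fin] at this
  have hcompl : L ⊔ coordSub C = ⊤ := by
    apply Submodule.eq_top_of_finrank_eq
    have h1 := Submodule.finrank_sup_add_finrank_inf_eq L (coordSub C)
    rw [hdisj] at h1
    simp only [finrank_bot, add_zero] at h1
    rw [h1, finrank_coordSub, finrank_ambient_eq, ← hcard]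
    omega
  obtain ⟨M, hMdef⟩ : ∃ M, M = L' ⊓ coordSub C := ⟨_, rfl⟩
  obtain ⟨C', hC'sub, hinf, hsup⟩ :=
    exists_coord_compl (Module.finrank ℝ M) C M rfl (hMdef ▸ inf_le_right)
  refine ⟨C'ᶜ, ?_, ?_, ?_⟩
  · intro x hxJ
    rw [Finset.mem_compl]
    intro hxC'
    have := hC'sub hxC'
    rw [hC, Finset.mem_compl] at this
    exact this hxJ
  · -- counting
    have h1 := Submodule.finrank_sup_add_finrank_inf_eq M (coordSub C')
    rw [hinf, hsup] at h1
    simp only [finrank_bot, add_zero] at h1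
    rw [finrank_coordSub, finrank_coordSub] at h1
    -- L' = L ⊔ M
    have hL' : L' = L ⊔ M := by
      have h := inf_sup_assoc_of_le (coordSub C) (hLL' : L ≤ L')
      rw [sup_comm (coordSub C) L, hcompl, inf_top_eq] at h
      rw [hMdef, ← sup_comm, h]
    have hLM : L ⊓ M = ⊥ := by
      rw [eq_bot_iff, ← hdisj]
      exact inf_le_inf_left L (hMdef ▸ inf_le_right)
    have h2 := Submodule.finrank_sup_add_finrank_inf_eq L M
    rw [hLM, ← hL'] at h2
    simp only [finrank_bot, add_zero] at h2
    have hC'card : C'.card + C'ᶜ.card = n := by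
      have := Finset.card_add_card_compl C'
      rwa [Fintype.card_fin] at this
    have hLle : Module.finrank ℝ L ≤ n := by
      have := Submodule.finrank_le L
      rwa [finrank_ambient_eq] at this
    omega
  · rw [compl_compl, eq_bot_iff]
    intro x ⟨hxL', hxC'⟩
    have : x ∈ M ⊓ coordSub C' :=
      ⟨hMdef ▸ (⟨hxL', coordSub_mono hC'sub hxC'⟩ : x ∈ L' ⊓ coordSub C), hxC'⟩
    simpa [hinf] using this

lemma main_aux (k : ℕ) (L : Fin k → Submodule ℝ (Fin n → ℝ)) (hmono : Monotone L) (m : ℕ) :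
    ∃ Jf : Fin k → Finset (Fin n),
      (∀ i j : Fin k, i ≤ j → j.val ≤ m → Jf i ⊆ Jf j) ∧
      (∀ i : Fin k, i.val ≤ m →
        (Jf i).card = Module.finrank ℝ (L i) ∧ L i ⊓ coordSub (Jf i)ᶜ = ⊥) := by
  induction m with
  | zero =>
    rcases Nat.eq_zero_or_pos k with rfl | hk
    · exact ⟨fun _ => ∅, fun i => i.elim0, fun i => i.elim0⟩
    · obtain ⟨J0, _, hc, hd⟩ :=
        step (bot_le : (⊥ : Submodule ℝ (Fin n → ℝ)) ≤ L ⟨0, hk⟩) ∅ (by simp) (by simp)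
      refine ⟨fun _ => J0, fun i j _ _ => subset_rfl, ?_⟩
      intro i hi
      have : i = ⟨0, hk⟩ := Fin.ext (Nat.le_zero.mp hi)
      rw [this]; exact ⟨hc, hd⟩
  | succ m ihm =>
    obtain ⟨Jf, hnest, hgood⟩ := ihm
    by_cases hmk : m + 1 < k
    · have hm0 : m < k := Nat.lt_of_succ_lt hmk
      set i1 : Fin k := ⟨m + 1, hmk⟩ with hi1
      set i0 : Fin k := ⟨m, hm0⟩ with hi0
      obtain ⟨hc0, hd0⟩ := hgood i0 (le_refl m)
      obtain ⟨J', hsub, hc', hd'⟩ :=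
        step (hmono (show i0 ≤ i1 by simp [hi0, hi1, Fin.le_def])) (Jf i0) hc0 hd0
      classical
      refine ⟨Function.update Jf i1 J', ?_, ?_⟩
      · intro i j hij hjm
        by_cases hj1 : j = i1
        · subst hj1
          rw [Function.update_self]
          by_cases hi' : i = i1
          · subst hi'; rw [Function.update_self]
          · have him : i.val ≤ m := by
              have h1 : i.val ≤ i1.val := hij
              have h2 : i.val ≠ m + 1 := fun h => hi' (Fin.ext h)
              simp only [hi1] at h1
              omega
            rw [Function.update_of_ne hi']
            exact (hnest i i0 (by simp [hi0, Fin.le_def, him]) (le_refl m)).trans hsub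
        · have hjm' : j.val ≤ m := by
            have : j.val ≠ m + 1 := fun h => hj1 (Fin.ext h)
            omega
          have hi' : i ≠ i1 := by
            intro h; subst h
            have : (i1 : ℕ) ≤ j.val := hij
            simp [hi1] at this; omega
          rw [Function.update_of_ne hi', Function.update_of_ne hj1]
          exact hnest i j hij hjm'
      · intro i him
        by_cases hi' : i = i1
        · subst hi'; rw [Function.update_self]; exact ⟨hc', hd'⟩
        · have : i.val ≤ m := by
            have : i.val ≠ m + 1 := fun h => hi' (Fin.ext h)
            omega
          rw [Function.update_of_ne hi']
          exact hgood i this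
    · refine ⟨Jf, ?_, ?_⟩
      · intro i j hij hjm
        exact hnest i j hij (by have := j.isLt; omega)
      · intro i him
        exact hgood i (by have := i.isLt; omega)

end FlagAux

/-- For a flag `0 ⊊ L 1 ⊊ ⋯ ⊊ L k ⊊ ℝ^n` with `dim (L i) = d i`,
there are nested subsets `J 1 ⊆ ⋯ ⊆ J k` of `{1, …, n}` with `|J i| = d i` and
`J i ∈ supp (L i)` for all `i`. -/
theorem flag_nested_supports (n k : ℕ) (L : Fin k → Submodule ℝ (Fin n → ℝ))
    (d : Fin k → ℕ)
    (hmono : StrictMono L) (hbot : ∀ i, ⊥ < L i) (htop : ∀ i, L i < ⊤)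
    (hd : ∀ i, Module.finrank ℝ (L i) = d i) :
    ∃ J : Fin k → Finset (Fin n),
      (∀ i j : Fin k, i ≤ j → J i ⊆ J j) ∧
      (∀ i, (J i).card = d i) ∧
      (∀ i, memSupp (J i) (L i)) := by
  obtain ⟨Jf, hnest, hgood⟩ := FlagAux.main_aux k L hmono.monotone k
  refine ⟨Jf, ?_, ?_, ?_⟩
  · intro i j hij
    exact hnest i j hij (le_of_lt j.isLt)
  · intro i
    rw [(hgood i (le_of_lt i.isLt)).1, hd i]
  · intro i
    obtain ⟨hc, hdj⟩ := hgood i (le_of_lt i.isLt)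
    exact FlagAux.memSupp_of _ _ hc hdj


end
end

section
/- Let X be a metric space, let {G_i}_{i ∈ I} be a locally finite collection of open subsets of X, and let Z ⊆ X be an open set such that G_i ∩ G_j ⊆ Z for all i ≠ j. Then there exist pairwise disjoint open sets {E_i}_{i ∈ I} such that G_i \ Z ⊆ E_i ⊆ G_i for every i ∈ I. -/
/-!
Put `F i = G i \ Z`. Since `G i` is open and misses `F j` for `j ≠ i`, and the `F j` are
locally finite, `G i` also misses the closure of `⋃ j ≠ i, F j`; so every point of `F i` is
strictly closer to `F i` than to the other `F j` together. The set `E i` of points of `G i` with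
this property is open, and two such sets are disjoint: a common point would be closer to `F i`
than to `F j` and closer to `F j` than to `F i`.
-/

open Metric Set

theorem LocallyFinite.disjoint_closure_iUnion {X ι : Type*} [TopologicalSpace X] {f : ι → Set X}
    {U : Set X} (hf : LocallyFinite f) (hU : IsOpen U) (h : ∀ i, Disjoint U (f i)) :
    Disjoint U (closure (⋃ i, f i)) := by
  rw [hf.closure_iUnion, disjoint_iUnion_right]
  exact fun i => (h i).closure_right hU

theorem LocallyFinite.disjoint_closure_biUnion_ne {X ι : Type*} [TopologicalSpace X]
    {f : ι → Set X} {U : Set X} (hf : LocallyFinite f) (hU : IsOpen U) (i : ι)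
    (h : ∀ j, j ≠ i → Disjoint U (f j)) :
    Disjoint U (closure (⋃ j ≠ i, f j)) := by
  rw [← iUnion_subtype (· ≠ i) (f ·)]
  exact (hf.comp_injective Subtype.val_injective).disjoint_closure_iUnion hU fun j => h j j.2

section VoronoiCell

variable {X ι : Type*} [PseudoEMetricSpace X]

def voronoiCell (F : ι → Set X) (i : ι) : Set X :=
  {x | infEDist x (F i) < infEDist x (⋃ j ≠ i, F j)}

theorem isOpen_voronoiCell (F : ι → Set X) (i : ι) : IsOpen (voronoiCell F i) :=
  isOpen_lt continuous_infEDist continuous_infEDist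

theorem pairwise_disjoint_voronoiCell (F : ι → Set X) :
    Pairwise (Function.onFun Disjoint (voronoiCell F)) := by
  intro i j hij
  refine disjoint_left.2 fun x hxi hxj => lt_irrefl (infEDist x (F i)) ?_
  have hFj : infEDist x (⋃ k ≠ i, F k) ≤ infEDist x (F j) :=
    infEDist_anti (subset_biUnion_of_mem (u := F) hij.symm)
  have hFi : infEDist x (⋃ k ≠ j, F k) ≤ infEDist x (F i) :=
    infEDist_anti (subset_biUnion_of_mem (u := F) hij)
  calc infEDist x (F i) < infEDist x (⋃ k ≠ i, F k) := hxi
    _ ≤ infEDist x (F j) := hFj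
    _ < infEDist x (⋃ k ≠ j, F k) := hxj
    _ ≤ infEDist x (F i) := hFi

theorem subset_voronoiCell {F : ι → Set X} {i : ι}
    (h : Disjoint (F i) (closure (⋃ j ≠ i, F j))) : F i ⊆ voronoiCell F i := by
  intro x hx
  have hpos : infEDist x (⋃ j ≠ i, F j) ≠ 0 := fun h0 =>
    h.notMem_of_mem_left hx (mem_closure_iff_infEDist_zero.2 h0)
  simpa only [voronoiCell, mem_ofPred_eq, infEDist_zero_of_mem hx] using pos_iff_ne_zero.2 hpos

end VoronoiCell

theorem separate_by_disjoint_opens_general {X : Type*} [MetricSpace X] {ι : Type*}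
    (G : ι → Set X) (Z : Set X)
    (hG : ∀ i, IsOpen (G i)) (hlf : LocallyFinite G)
    (hij : ∀ i j, i ≠ j → G i ∩ G j ⊆ Z) :
    ∃ E : ι → Set X, (∀ i, IsOpen (E i)) ∧ Pairwise (Function.onFun Disjoint E) ∧
      ∀ i, G i \ Z ⊆ E i ∧ E i ⊆ G i := by
  set F : ι → Set X := fun i => G i \ Z
  have hGF : ∀ i j, j ≠ i → Disjoint (G i) (F j) := fun i j hji =>
    disjoint_left.2 fun _ hxi hxj => hxj.2 (hij i j hji.symm ⟨hxi, hxj.1⟩)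
  have hsep : ∀ i, Disjoint (G i) (closure (⋃ j ≠ i, F j)) := fun i =>
    (hlf.subset fun _ => sdiff_subset).disjoint_closure_biUnion_ne (hG i) i (hGF i)
  refine ⟨fun i => G i ∩ voronoiCell F i, fun i => (hG i).inter (isOpen_voronoiCell F i),
    fun i j hne => (pairwise_disjoint_voronoiCell F hne).mono inter_subset_right inter_subset_right,
    fun i => ⟨subset_inter sdiff_subset ?_, inter_subset_left⟩⟩
  exact subset_voronoiCell (F := F) ((hsep i).mono_left sdiff_subset)

/-- Let `X` be a metric space, `{G i}` a locally finite collection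
of open subsets of `X`, and `Z` an open set such that `G i ∩ G j ⊆ Z` for all `i ≠ j`.
Then there are pairwise disjoint open sets `E i` with `G i \ Z ⊆ E i ⊆ G i`. -/
theorem separate_by_disjoint_opens {X : Type*} [MetricSpace X] {ι : Type*}
    (G : ι → Set X) (Z : Set X)
    (hG : ∀ i, IsOpen (G i)) (hZ : IsOpen Z) (hlf : LocallyFinite G)
    (hij : ∀ i j, i ≠ j → G i ∩ G j ⊆ Z) :
    ∃ E : ι → Set X, (∀ i, IsOpen (E i)) ∧ Pairwise (Function.onFun Disjoint E) ∧
      ∀ i, G i \ Z ⊆ E i ∧ E i ⊆ G i :=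
  separate_by_disjoint_opens_general G Z hG hlf hij
end
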